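/- Let X, Y and G be random variables on a common probability space taking values in finite sets, and assume G is independent of the pair (X, Y). Let Z_T = E_T(X) and Z_G = E_G(X) for arbitrary functions E_T and E_G, and let Z = f(Z_T, Z_G, G) for an arbitrary function f. Then I(Z; Y) ≤ I(Z_T; Y) + I(Z_G; Y | Z_T). (Theorem 1, split bound, inequality (10).) -/

import Mathlib

open scoped BigOperators

section InfoTheory

variable {Ω : Type*} [Fintype Ω]

open Classical in
/-- The probability mass function of the random variable `f` under the weight `w`
(a probability measure on the finite sample space `Ω`). -/
noncomputable def pmfOf {α : Type*} [Fintype α] (w : Ω → ℝ) (f : Ω → α) (a : α) : ℝ :=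
  ∑ ω, if f ω = a then w ω else 0

/-- Shannon entropy of a finite-valued random variable (with the convention `0 log 0 = 0`,
which holds automatically since `Real.log 0 = 0`). -/
noncomputable def entropy {α : Type*} [Fintype α] (w : Ω → ℝ) (f : Ω → α) : ℝ :=
  -∑ a, pmfOf w f a * Real.log (pmfOf w f a)

/-- Mutual information `I(f; g) = H(f) + H(g) - H(f, g)`. -/
noncomputable def mutualInfo {α β : Type*} [Fintype α] [Fintype β]
    (w : Ω → ℝ) (f : Ω → α) (g : Ω → β) : ℝ :=
  entropy w f + entropy w g - entropy w (fun ω => (f ω, g ω))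

/-- Conditional mutual information
`I(f; g | h) = H(f, h) + H(g, h) - H(f, g, h) - H(h)`. -/
noncomputable def condMutualInfo {α β γ : Type*} [Fintype α] [Fintype β] [Fintype γ]
    (w : Ω → ℝ) (f : Ω → α) (g : Ω → β) (h : Ω → γ) : ℝ :=
  entropy w (fun ω => (f ω, h ω)) + entropy w (fun ω => (g ω, h ω))
    - entropy w (fun ω => (f ω, g ω, h ω)) - entropy w h

/-- Independence of two finite-valued random variables: the joint law is
the product of the marginal laws. -/
def IndepRV {α β : Type*} [Fintype α] [Fintype β]
    (w : Ω → ℝ) (f : Ω → α) (g : Ω → β) : Prop :=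
  ∀ a b, pmfOf w (fun ω => (f ω, g ω)) (a, b) = pmfOf w f a * pmfOf w g b

end InfoTheory

/-! Since `Z` is a function of `W = (Z_T, Z_G, G)`, data processing gives `I(Z; Y) ≤ I(W; Y)`.
Data processing is `I(W; Y | φ W) ≥ 0`, i.e. Gibbs' inequality for the law of `(W, Y, φ W)`
against the law with the same `(W, φ W)`- and `(Y, φ W)`-marginals under which `W` and `Y` are
conditionally independent given `φ W`. As `G` is independent of `(X, Y)`, hence of
`((Z_T, Z_G), Y)`, both `H(W)` and `H(W, Y)` split off `H(G)`, so `I(W; Y) = I((Z_T, Z_G); Y)`;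
the chain rule turns this into `I(Z_T; Y) + I(Z_G; Y | Z_T)`.

Writing `H(f) = -∑ ω, w ω * log p_f (f ω)` shows that an entropy only depends on the partition
of `Ω` into the fibres of `f`, which takes care of all rearrangements of tuples. -/

open Finset Real

theorem sum_mul_log_le_sum_mul_log {ι : Type*} [Fintype ι] {p q : ι → ℝ}
    (hp : ∀ i, 0 ≤ p i) (hq : ∀ i, 0 ≤ q i) (hpq : ∀ i, p i ≠ 0 → q i ≠ 0)
    (hsum : ∑ i, q i ≤ ∑ i, p i) :
    ∑ i, p i * log (q i) ≤ ∑ i, p i * log (p i) := by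
  have hterm : ∀ i, p i * log (q i) - p i * log (p i) ≤ q i - p i := by
    intro i
    rcases (hp i).eq_or_lt with hpi | hpi
    · simp [← hpi, hq i]
    have hqi : 0 < q i := (hq i).lt_of_ne' (hpq i hpi.ne')
    calc p i * log (q i) - p i * log (p i) = p i * log (q i / p i) := by
          rw [log_div hqi.ne' hpi.ne']; ring
      _ ≤ p i * (q i / p i - 1) :=
          mul_le_mul_of_nonneg_left (log_le_sub_one_of_pos (div_pos hqi hpi)) hpi.le
      _ = q i - p i := by field_simp
  have := sum_le_sum fun i (_ : i ∈ univ) => hterm i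
  rw [sum_sub_distrib, sum_sub_distrib] at this
  linarith

section InfoTheory

variable {Ω : Type*} [Fintype Ω] {α β γ : Type*} [Fintype α] [Fintype β] [Fintype γ]
  {w : Ω → ℝ}

open Classical

theorem sum_pmfOf_mul (w : Ω → ℝ) (f : Ω → α) (g : α → ℝ) :
    ∑ a, pmfOf w f a * g a = ∑ ω, w ω * g (f ω) := by
  simp only [pmfOf, sum_mul, ite_mul, zero_mul]
  rw [sum_comm]
  simp

theorem sum_pmfOf (w : Ω → ℝ) (f : Ω → α) : ∑ a, pmfOf w f a = ∑ ω, w ω := by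
  simpa using sum_pmfOf_mul w f fun _ => 1

theorem pmfOf_nonneg (hw : ∀ ω, 0 ≤ w ω) (f : Ω → α) (a : α) : 0 ≤ pmfOf w f a :=
  sum_nonneg fun ω _ => by split_ifs <;> simp [hw ω]

theorem pmfOf_apply_ne_zero (hw : ∀ ω, 0 ≤ w ω) (f : Ω → α) {ω : Ω} (hω : w ω ≠ 0) :
    pmfOf w f (f ω) ≠ 0 := by
  refine (lt_of_lt_of_le ((hw ω).lt_of_ne' hω) ?_).ne'
  unfold pmfOf
  simpa using single_le_sum (fun ω' _ => by split_ifs <;> simp [hw ω'])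
    (mem_univ ω) (f := fun ω' => if f ω' = f ω then w ω' else 0)

theorem exists_of_pmfOf_ne_zero {f : Ω → α} {a : α} (h : pmfOf w f a ≠ 0) :
    ∃ ω, f ω = a ∧ w ω ≠ 0 := by
  obtain ⟨ω, -, hω⟩ := exists_ne_zero_of_sum_ne_zero h
  exact ⟨ω, by_contra fun hne => hω (if_neg hne), fun h0 => hω (by simp [h0])⟩

theorem pmfOf_comp (w : Ω → ℝ) (φ : α → β) (f : Ω → α) (b : β) :
    pmfOf w (fun ω => φ (f ω)) b = ∑ a, if φ a = b then pmfOf w f a else 0 := by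
  calc pmfOf w (fun ω => φ (f ω)) b = ∑ ω, w ω * if φ (f ω) = b then 1 else 0 := by
        simp only [pmfOf, mul_boole]
    _ = ∑ a, if φ a = b then pmfOf w f a else 0 := by
        rw [← sum_pmfOf_mul w f fun a => if φ a = b then 1 else 0]
        simp only [mul_boole]

theorem sum_pmfOf_prod_left (w : Ω → ℝ) (f : Ω → α) (g : Ω → β) (b : β) :
    ∑ a, pmfOf w (fun ω => (f ω, g ω)) (a, b) = pmfOf w g b := by
  simp only [pmfOf, Prod.mk.injEq, ite_and]
  rw [sum_comm]
  simp

theorem entropy_eq_sum (w : Ω → ℝ) (f : Ω → α) :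
    entropy w f = -∑ ω, w ω * log (pmfOf w f (f ω)) := by
  rw [entropy, sum_pmfOf_mul w f fun a => log (pmfOf w f a)]

theorem entropy_eq_of_eq_iff_eq (w : Ω → ℝ) {f : Ω → α} {g : Ω → β}
    (hfg : ∀ ω ω', f ω' = f ω ↔ g ω' = g ω) : entropy w f = entropy w g := by
  simp only [entropy_eq_sum, pmfOf, hfg]

theorem IndepRV.comp_right {f : Ω → α} {g : Ω → β} (hfg : IndepRV w f g) (ψ : β → γ) :
    IndepRV w f fun ω => ψ (g ω) := by
  intro a c
  rw [show pmfOf w (fun ω => (f ω, ψ (g ω))) (a, c)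
      = pmfOf w (fun ω => Prod.map id ψ (f ω, g ω)) (a, c) from rfl,
    pmfOf_comp w (Prod.map id ψ) (fun ω => (f ω, g ω)), pmfOf_comp w ψ g, mul_sum,
    Fintype.sum_prod_type]
  simp [Prod.ext_iff, ite_and, hfg _ _, mul_ite]

theorem entropy_prod_of_indepRV (hw : ∀ ω, 0 ≤ w ω) {f : Ω → α} {g : Ω → β}
    (hfg : IndepRV w f g) :
    entropy w (fun ω => (f ω, g ω)) = entropy w f + entropy w g := by
  simp only [entropy_eq_sum, ← neg_add, ← sum_add_distrib, ← mul_add]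
  congr 1
  refine sum_congr rfl fun ω _ => ?_
  rcases eq_or_ne (w ω) 0 with hω | hω
  · simp [hω]
  rw [hfg, log_mul (pmfOf_apply_ne_zero hw f hω) (pmfOf_apply_ne_zero hw g hω)]

noncomputable def condProdPmf (w : Ω → ℝ) (f : Ω → α) (g : Ω → β) (h : Ω → γ)
    (x : α × β × γ) : ℝ :=
  pmfOf w (fun ω => (f ω, h ω)) (x.1, x.2.2) * pmfOf w (fun ω => (g ω, h ω)) (x.2.1, x.2.2)
    / pmfOf w h x.2.2

theorem sum_condProdPmf (w : Ω → ℝ) (f : Ω → α) (g : Ω → β) (h : Ω → γ) :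
    ∑ x, condProdPmf w f g h x = ∑ ω, w ω := by
  have hfiber : ∀ c, ∑ a, ∑ b, condProdPmf w f g h (a, b, c) = pmfOf w h c := fun c => by
    simp only [condProdPmf, ← sum_div, ← sum_mul_sum, sum_pmfOf_prod_left, mul_self_div_self]
  calc ∑ x, condProdPmf w f g h x = ∑ a, ∑ b, ∑ c, condProdPmf w f g h (a, b, c) := by
        simp only [Fintype.sum_prod_type]
    _ = ∑ c, ∑ a, ∑ b, condProdPmf w f g h (a, b, c) :=
        (sum_congr rfl fun _ _ => sum_comm).trans sum_comm
    _ = ∑ ω, w ω := by simp only [hfiber, sum_pmfOf]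

theorem condProdPmf_nonneg (hw : ∀ ω, 0 ≤ w ω) (f : Ω → α) (g : Ω → β) (h : Ω → γ)
    (x : α × β × γ) : 0 ≤ condProdPmf w f g h x :=
  div_nonneg (mul_nonneg (pmfOf_nonneg hw _ _) (pmfOf_nonneg hw _ _)) (pmfOf_nonneg hw _ _)

theorem log_condProdPmf_apply (hw : ∀ ω, 0 ≤ w ω) (f : Ω → α) (g : Ω → β) (h : Ω → γ)
    {ω : Ω} (hω : w ω ≠ 0) :
    log (condProdPmf w f g h (f ω, g ω, h ω)) =
      log (pmfOf w (fun ω => (f ω, h ω)) (f ω, h ω))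
        + log (pmfOf w (fun ω => (g ω, h ω)) (g ω, h ω)) - log (pmfOf w h (h ω)) := by
  rw [condProdPmf, log_div (mul_ne_zero (pmfOf_apply_ne_zero hw _ hω)
    (pmfOf_apply_ne_zero hw _ hω)) (pmfOf_apply_ne_zero hw _ hω),
    log_mul (pmfOf_apply_ne_zero hw _ hω) (pmfOf_apply_ne_zero hw _ hω)]

theorem condMutualInfo_nonneg (hw : ∀ ω, 0 ≤ w ω) (f : Ω → α) (g : Ω → β) (h : Ω → γ) :
    0 ≤ condMutualInfo w f g h := by
  have hsupp : ∀ x, pmfOf w (fun ω => (f ω, g ω, h ω)) x ≠ 0 → condProdPmf w f g h x ≠ 0 := by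
    intro x hx
    obtain ⟨ω, rfl, hω⟩ := exists_of_pmfOf_ne_zero hx
    exact div_ne_zero (mul_ne_zero (pmfOf_apply_ne_zero hw _ hω) (pmfOf_apply_ne_zero hw _ hω))
      (pmfOf_apply_ne_zero hw _ hω)
  have gibbs := sum_mul_log_le_sum_mul_log (pmfOf_nonneg hw _) (condProdPmf_nonneg hw f g h)
    hsupp (by rw [sum_condProdPmf, sum_pmfOf])
  rw [sum_pmfOf_mul, sum_pmfOf_mul] at gibbs
  have hsplit : ∑ ω, w ω * log (condProdPmf w f g h (f ω, g ω, h ω)) =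
      ∑ ω, w ω * (log (pmfOf w (fun ω => (f ω, h ω)) (f ω, h ω))
        + log (pmfOf w (fun ω => (g ω, h ω)) (g ω, h ω)) - log (pmfOf w h (h ω))) := by
    refine sum_congr rfl fun ω _ => ?_
    rcases eq_or_ne (w ω) 0 with hω | hω
    · simp [hω]
    rw [log_condProdPmf_apply hw f g h hω]
  simp only [hsplit, mul_sub, mul_add, sum_add_distrib, sum_sub_distrib] at gibbs
  simp only [condMutualInfo, entropy_eq_sum]
  linarith

theorem mutualInfo_congr_left {f : Ω → α} {f' : Ω → β} (g : Ω → γ)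
    (hff' : ∀ ω ω', f ω' = f ω ↔ f' ω' = f' ω) : mutualInfo w f g = mutualInfo w f' g := by
  rw [mutualInfo, mutualInfo, entropy_eq_of_eq_iff_eq w hff',
    entropy_eq_of_eq_iff_eq w (f := fun ω => (f ω, g ω)) (g := fun ω => (f' ω, g ω))
      fun ω ω' => by simp only [Prod.mk.injEq, hff']]

theorem mutualInfo_comp_le (hw : ∀ ω, 0 ≤ w ω) (f : Ω → α) (g : Ω → β) (φ : α → γ) :
    mutualInfo w (fun ω => φ (f ω)) g ≤ mutualInfo w f g := by
  have hcmi := condMutualInfo_nonneg hw f g fun ω => φ (f ω)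
  rw [condMutualInfo,
    entropy_eq_of_eq_iff_eq w (f := fun ω => (f ω, φ (f ω))) (g := f) fun ω ω' => by aesop,
    entropy_eq_of_eq_iff_eq w (f := fun ω => (g ω, φ (f ω))) (g := fun ω => (φ (f ω), g ω))
      fun ω ω' => by simp only [Prod.mk.injEq, and_comm],
    entropy_eq_of_eq_iff_eq w (f := fun ω => (f ω, g ω, φ (f ω))) (g := fun ω => (f ω, g ω))
      fun ω ω' => by aesop] at hcmi
  rw [mutualInfo, mutualInfo]
  linarith

theorem mutualInfo_prod_eq_of_indepRV (hw : ∀ ω, 0 ≤ w ω) {f : Ω → α} {g : Ω → β}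
    {G : Ω → γ} (hG : IndepRV w G fun ω => (f ω, g ω)) :
    mutualInfo w (fun ω => (G ω, f ω)) g = mutualInfo w f g := by
  rw [mutualInfo, mutualInfo, entropy_prod_of_indepRV hw (hG.comp_right Prod.fst),
    entropy_eq_of_eq_iff_eq w (f := fun ω => ((G ω, f ω), g ω))
      (g := fun ω => (G ω, f ω, g ω)) fun ω ω' => by simp only [Prod.mk.injEq, and_assoc],
    entropy_prod_of_indepRV hw hG]
  ring

theorem mutualInfo_prod_eq_add_condMutualInfo (w : Ω → ℝ) (f : Ω → α) (g : Ω → β)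
    (h : Ω → γ) :
    mutualInfo w (fun ω => (f ω, g ω)) h = mutualInfo w f h + condMutualInfo w g h f := by
  rw [mutualInfo, mutualInfo, condMutualInfo,
    entropy_eq_of_eq_iff_eq w (f := fun ω => (g ω, f ω)) (g := fun ω => (f ω, g ω))
      fun ω ω' => by simp only [Prod.mk.injEq, and_comm],
    entropy_eq_of_eq_iff_eq w (f := fun ω => (h ω, f ω)) (g := fun ω => (f ω, h ω))
      fun ω ω' => by simp only [Prod.mk.injEq, and_comm],
    entropy_eq_of_eq_iff_eq w (f := fun ω => (g ω, h ω, f ω))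
      (g := fun ω => ((f ω, g ω), h ω)) fun ω ω' => by simp only [Prod.mk.injEq]; tauto]
  ring

end InfoTheory

theorem graph_conditioned_split_bound_general
    {Ω 𝒳 𝒴 𝒢 T U V : Type*} [Fintype Ω] [Fintype 𝒳] [Fintype 𝒴] [Fintype 𝒢]
    [Fintype T] [Fintype U] [Fintype V]
    (w : Ω → ℝ) (hw0 : ∀ ω, 0 ≤ w ω)
    (X : Ω → 𝒳) (Y : Ω → 𝒴) (G : Ω → 𝒢)
    (hGindep : IndepRV w G (fun ω => (X ω, Y ω)))
    (E_T : 𝒳 → T) (E_G : 𝒳 → U) (f : T × U × 𝒢 → V) :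
    mutualInfo w (fun ω => f (E_T (X ω), E_G (X ω), G ω)) Y ≤
      mutualInfo w (fun ω => E_T (X ω)) Y +
        condMutualInfo w (fun ω => E_G (X ω)) Y (fun ω => E_T (X ω)) := by
  have hG : IndepRV w G fun ω => ((E_T (X ω), E_G (X ω)), Y ω) :=
    hGindep.comp_right fun p => ((E_T p.1, E_G p.1), p.2)
  calc mutualInfo w (fun ω => f (E_T (X ω), E_G (X ω), G ω)) Y
      ≤ mutualInfo w (fun ω => (E_T (X ω), E_G (X ω), G ω)) Y := mutualInfo_comp_le hw0 _ Y f
    _ = mutualInfo w (fun ω => (G ω, E_T (X ω), E_G (X ω))) Y :=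
        mutualInfo_congr_left Y fun ω ω' => by simp only [Prod.mk.injEq]; tauto
    _ = mutualInfo w (fun ω => (E_T (X ω), E_G (X ω))) Y := mutualInfo_prod_eq_of_indepRV hw0 hG
    _ = _ := mutualInfo_prod_eq_add_condMutualInfo w _ _ Y

/-- **Theorem 1 (split bound, inequality (10)).**
If `G` is independent of the pair `(X, Y)`, `Z_T = E_T(X)`, `Z_G = E_G(X)` and
`Z = f(Z_T, Z_G, G)`, then `I(Z; Y) ≤ I(Z_T; Y) + I(Z_G; Y | Z_T)`. -/
theorem graph_conditioned_split_bound
    {Ω 𝒳 𝒴 𝒢 T U V : Type*} [Fintype Ω] [Fintype 𝒳] [Fintype 𝒴] [Fintype 𝒢]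
    [Fintype T] [Fintype U] [Fintype V]
    (w : Ω → ℝ) (hw0 : ∀ ω, 0 ≤ w ω) (hw1 : ∑ ω, w ω = 1)
    (X : Ω → 𝒳) (Y : Ω → 𝒴) (G : Ω → 𝒢)
    (hGindep : IndepRV w G (fun ω => (X ω, Y ω)))
    (E_T : 𝒳 → T) (E_G : 𝒳 → U) (f : T × U × 𝒢 → V) :
    mutualInfo w (fun ω => f (E_T (X ω), E_G (X ω), G ω)) Y ≤
      mutualInfo w (fun ω => E_T (X ω)) Y +
        condMutualInfo w (fun ω => E_G (X ω)) Y (fun ω => E_T (X ω)) :=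
  graph_conditioned_split_bound_general w hw0 X Y G hGindep E_T E_G f
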